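/- Let 1 ≤ p_A, p_B, p_H ≤ ∞ with p_H ≤ max{p_A, p_B}, and let a, b ∈ ℝ^d satisfy αᵀa ≤ β and αᵀb > β. Then inf_{x, y ∈ 𝓗} ( ‖x − a‖_{p_A} + ‖x − y‖_{p_H} + ‖y − b‖_{p_B} ) = inf_{x ∈ 𝓗} ( ‖x − a‖_{p_A} + ‖x − b‖_{p_B} ); that is, the shortest path between a and b crosses the hyperplane at a single point and gains nothing by traveling along 𝓗. -/

import Mathlib

/-!
A two-gate path can always be shortened to a one-gate path. If `p_H ≤ p_A`, the hop `x → y`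
along `𝓗` is no longer in `ℓ_{p_A}` than in `ℓ_{p_H}` (the `ℓ_p` norms decrease in `p`),
so by the triangle inequality entering directly at `y` is no longer; if `p_H ≤ p_B`, exit
directly at `x` instead. Conversely a one-gate path is a two-gate path with `x = y`.
-/

open scoped ENNReal BigOperators

/-- The `ℓ_p` norm on `ℝ^d` for `p : ℝ≥0∞` (intended for `1 ≤ p ≤ ∞`). -/
noncomputable def lpNorm {d : ℕ} (p : ℝ≥0∞) (x : Fin d → ℝ) : ℝ :=
  if p = ∞ then ⨆ k, |x k| else (∑ k, |x k| ^ p.toReal) ^ (1 / p.toReal)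

namespace Real

theorem iInf_eq_iInf_of_forall_exists_le {ι κ : Sort*} {f : ι → ℝ} {g : κ → ℝ}
    (hf : BddBelow (Set.range f)) (hg : BddBelow (Set.range g))
    (hfg : ∀ i, ∃ k, g k ≤ f i) (hgf : ∀ k, ∃ i, f i ≤ g k) :
    ⨅ i, f i = ⨅ k, g k := by
  cases isEmpty_or_nonempty κ with
  | inl hκ =>
    have : IsEmpty ι := ⟨fun i => hκ.false (hfg i).choose⟩
    simp only [Real.iInf_of_isEmpty]
  | inr hκ =>
    have : Nonempty ι := let ⟨k⟩ := hκ; ⟨(hgf k).choose⟩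
    refine le_antisymm (le_ciInf fun k => ?_) (le_ciInf fun i => ?_)
    · obtain ⟨i, hi⟩ := hgf k
      exact (ciInf_le hf i).trans hi
    · obtain ⟨k, hk⟩ := hfg i
      exact (ciInf_le hg k).trans hk

end Real

section LpNorm

variable {d : ℕ} {p q : ℝ≥0∞}

theorem lpNorm_eq_norm (hp : 1 ≤ p) (x : Fin d → ℝ) :
    lpNorm p x = ‖WithLp.toLp p x‖ := by
  rcases eq_or_ne p ∞ with rfl | hp_top
  · simp [lpNorm, PiLp.norm_eq_ciSup, Real.norm_eq_abs]
  · have hp_pos : 0 < p.toReal := ENNReal.toReal_pos (by positivity) hp_top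
    simp [lpNorm, hp_top, PiLp.norm_eq_sum hp_pos, Real.norm_eq_abs]

theorem lpNorm_nonneg (hp : 1 ≤ p) (x : Fin d → ℝ) : 0 ≤ lpNorm p x := by
  have : Fact (1 ≤ p) := ⟨hp⟩
  rw [lpNorm_eq_norm hp]
  exact norm_nonneg _

theorem lpNorm_zero (hp : 1 ≤ p) : lpNorm p (0 : Fin d → ℝ) = 0 := by
  have : Fact (1 ≤ p) := ⟨hp⟩
  rw [lpNorm_eq_norm hp, WithLp.toLp_zero, norm_zero]

theorem lpNorm_sub_comm (hp : 1 ≤ p) (x y : Fin d → ℝ) :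
    lpNorm p (x - y) = lpNorm p (y - x) := by
  have : Fact (1 ≤ p) := ⟨hp⟩
  rw [lpNorm_eq_norm hp, lpNorm_eq_norm hp, WithLp.toLp_sub, WithLp.toLp_sub, norm_sub_rev]

theorem lpNorm_sub_le_add (hp : 1 ≤ p) (x y z : Fin d → ℝ) :
    lpNorm p (x - z) ≤ lpNorm p (x - y) + lpNorm p (y - z) := by
  have : Fact (1 ≤ p) := ⟨hp⟩
  simp only [lpNorm_eq_norm hp, WithLp.toLp_sub]
  exact norm_sub_le_norm_sub_add_norm_sub _ _ _

theorem abs_le_lpNorm (hp : 1 ≤ p) (x : Fin d → ℝ) (k : Fin d) : |x k| ≤ lpNorm p x := by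
  have : Fact (1 ≤ p) := ⟨hp⟩
  rw [lpNorm_eq_norm hp, ← Real.norm_eq_abs]
  exact PiLp.norm_apply_le (WithLp.toLp p x) k

theorem lpNorm_rpow_eq_sum (hp : 1 ≤ p) (hp_top : p ≠ ∞) (x : Fin d → ℝ) :
    lpNorm p x ^ p.toReal = ∑ k, |x k| ^ p.toReal := by
  have hp_pos : 0 < p.toReal := ENNReal.toReal_pos (by positivity) hp_top
  rw [lpNorm, if_neg hp_top, ← Real.rpow_mul (by positivity), one_div_mul_cancel hp_pos.ne',
    Real.rpow_one]

theorem lpNorm_le_lpNorm_of_le (hp : 1 ≤ p) (hpq : p ≤ q) (x : Fin d → ℝ) :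
    lpNorm q x ≤ lpNorm p x := by
  set S := lpNorm p x
  have hS : 0 ≤ S := lpNorm_nonneg hp x
  rcases eq_or_ne q ∞ with rfl | hq_top
  · rw [lpNorm, if_pos rfl]
    exact Real.iSup_le (abs_le_lpNorm hp x) hS
  have hp_top : p ≠ ∞ := ne_top_of_le_ne_top hq_top hpq
  have hp_pos : 0 < p.toReal := ENNReal.toReal_pos (by positivity) hp_top
  have hpq' : p.toReal ≤ q.toReal := ENNReal.toReal_mono hq_top hpq
  have hq_pos : 0 < q.toReal := hp_pos.trans_le hpq'
  have hterm : ∀ k, |x k| ^ q.toReal ≤ |x k| ^ p.toReal * S ^ (q.toReal - p.toReal) := fun k =>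
    calc |x k| ^ q.toReal = |x k| ^ p.toReal * |x k| ^ (q.toReal - p.toReal) := by
          rw [← Real.rpow_add_of_nonneg (abs_nonneg _) hp_pos.le (sub_nonneg.2 hpq'),
            add_sub_cancel]
      _ ≤ |x k| ^ p.toReal * S ^ (q.toReal - p.toReal) := by
          gcongr
          exact abs_le_lpNorm hp x k
  have hsum : lpNorm q x ^ q.toReal ≤ S ^ q.toReal :=
    calc lpNorm q x ^ q.toReal = ∑ k, |x k| ^ q.toReal :=
          lpNorm_rpow_eq_sum (hp.trans hpq) hq_top x
      _ ≤ ∑ k, |x k| ^ p.toReal * S ^ (q.toReal - p.toReal) :=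
          Finset.sum_le_sum fun k _ => hterm k
      _ = S ^ p.toReal * S ^ (q.toReal - p.toReal) := by
        rw [← Finset.sum_mul, lpNorm_rpow_eq_sum hp hp_top]
      _ = S ^ q.toReal := by
        rw [← Real.rpow_add_of_nonneg hS hp_pos.le (sub_nonneg.2 hpq'), add_sub_cancel]
  exact (Real.rpow_le_rpow_iff (lpNorm_nonneg (hp.trans hpq) x) hS hq_pos).1 hsum

end LpNorm

theorem lpNorm_two_gate_ge_single_gate {d : ℕ} {pA pB pH : ℝ≥0∞} (hpA : 1 ≤ pA) (hpB : 1 ≤ pB)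
    (hpH : 1 ≤ pH) (hmax : pH ≤ max pA pB) (a b x y : Fin d → ℝ) :
    lpNorm pA (x - a) + lpNorm pB (x - b) ≤
        lpNorm pA (x - a) + lpNorm pH (x - y) + lpNorm pB (y - b) ∨
      lpNorm pA (y - a) + lpNorm pB (y - b) ≤
        lpNorm pA (x - a) + lpNorm pH (x - y) + lpNorm pB (y - b) := by
  rcases le_max_iff.1 hmax with hA | hB
  · right
    have hAH := lpNorm_le_lpNorm_of_le hpH hA (y - x)
    have := lpNorm_sub_le_add hpA y x a
    rw [lpNorm_sub_comm hpH y x] at hAH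
    linarith
  · left
    have hBH := lpNorm_le_lpNorm_of_le hpH hB (x - y)
    have := lpNorm_sub_le_add hpB x y b
    linarith

theorem stmt_11_general {d : ℕ} (pA pB pH : ℝ≥0∞) (hpA : 1 ≤ pA) (hpB : 1 ≤ pB) (hpH : 1 ≤ pH)
    (hmax : pH ≤ max pA pB)
    (α : Fin d → ℝ) (β : ℝ)
    (a b : Fin d → ℝ) :
    (⨅ xy : {z : (Fin d → ℝ) × (Fin d → ℝ) //
        (∑ i, α i * z.1 i = β) ∧ (∑ i, α i * z.2 i = β)},
      lpNorm pA (xy.1.1 - a) + lpNorm pH (xy.1.1 - xy.1.2) + lpNorm pB (xy.1.2 - b)) =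
    ⨅ x : {x : Fin d → ℝ // ∑ i, α i * x i = β},
      lpNorm pA (x.1 - a) + lpNorm pB (x.1 - b) := by
  refine Real.iInf_eq_iInf_of_forall_exists_le ?_ ?_ ?_ ?_
  · refine ⟨0, ?_⟩
    rintro _ ⟨z, rfl⟩
    exact add_nonneg (add_nonneg (lpNorm_nonneg hpA _) (lpNorm_nonneg hpH _)) (lpNorm_nonneg hpB _)
  · refine ⟨0, ?_⟩
    rintro _ ⟨x, rfl⟩
    exact add_nonneg (lpNorm_nonneg hpA _) (lpNorm_nonneg hpB _)
  · rintro ⟨⟨x, y⟩, hx, hy⟩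
    rcases lpNorm_two_gate_ge_single_gate hpA hpB hpH hmax a b x y with h | h
    exacts [⟨⟨x, hx⟩, h⟩, ⟨⟨y, hy⟩, h⟩]
  · rintro ⟨x, hx⟩
    refine ⟨⟨(x, x), hx, hx⟩, ?_⟩
    simp [lpNorm_zero hpH]

/-- Lemma 11: if `p_H ≤ max{p_A, p_B}`, the shortest path between points on
opposite sides of the hyperplane gains nothing by traveling along `𝓗`: the
optimal two-gate value equals the optimal single-gate value. -/
theorem stmt_11 {d : ℕ} (pA pB pH : ℝ≥0∞) (hpA : 1 ≤ pA) (hpB : 1 ≤ pB) (hpH : 1 ≤ pH)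
    (hmax : pH ≤ max pA pB)
    (α : Fin d → ℝ) (hα : α ≠ 0) (β : ℝ)
    (a b : Fin d → ℝ) (ha : ∑ i, α i * a i ≤ β) (hb : β < ∑ i, α i * b i) :
    (⨅ xy : {z : (Fin d → ℝ) × (Fin d → ℝ) //
        (∑ i, α i * z.1 i = β) ∧ (∑ i, α i * z.2 i = β)},
      lpNorm pA (xy.1.1 - a) + lpNorm pH (xy.1.1 - xy.1.2) + lpNorm pB (xy.1.2 - b)) =
    ⨅ x : {x : Fin d → ℝ // ∑ i, α i * x i = β},
      lpNorm pA (x.1 - a) + lpNorm pB (x.1 - b) :=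
  stmt_11_general pA pB pH hpA hpB hpH hmax α β a b
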